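/- Let γ > 0 and define h : ℤ₊ → ℝ by h(k) = k·log(1 + γ/k²), and let r ∈ (0,1) be the global maximizer of g(x) = x·log(1 + 1/x²) over (0,∞). Assume r√γ ≥ 1. Then for every positive integer k, h(k) ≤ max( h(⌊r√γ⌋), h(⌈r√γ⌉) ); that is, the maximum of h over the positive integers is attained at ⌊r√γ⌋ or at ⌈r√γ⌉. This follows from the identity h(k) = √γ · g(k/√γ) together with the concavity of g on the relevant interval. -/

import Mathlib

/-!
Writing `s = √γ`, one has `h k = s · g (k / s)` with `g x = x log (1 + 1/x²)`.
The derivative of `g` is `-φ (1/x²)` with `φ u = 2u/(1+u) - log (1+u)`, and `φ` increases on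
`[0, 1]` from `φ 0 = 0` and decreases on `[1, ∞)`. Since `r` maximizes `g`, `φ (1/r²) = 0` with
`1/r² ≥ 1`, so `φ (1/x²)` changes sign only at `x = r`: `g` increases on `(0, r]` and decreases
on `[r, ∞)`. Hence `k ↦ g (k / s)` increases up to `r s` and decreases after it, and its maximum
over positive integers sits at `⌊r s⌋` or `⌈r s⌉`.
-/

/-- Uniform-allocation objective `h k = k log (1 + γ/k²)`. -/
noncomputable def hWF (γ : ℝ) (k : ℕ) : ℝ := (k : ℝ) * Real.log (1 + γ / (k : ℝ) ^ 2)

open Set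

noncomputable def gWF (x : ℝ) : ℝ := x * Real.log (1 + 1 / x ^ 2)

noncomputable def phiWF (u : ℝ) : ℝ := 2 * u / (1 + u) - Real.log (1 + u)

lemma hasDerivAt_phiWF {u : ℝ} (hu : -1 < u) :
    HasDerivAt phiWF ((1 - u) / (1 + u) ^ 2) u := by
  have hne : (1 : ℝ) + u ≠ 0 := by linarith
  have hfrac : HasDerivAt (fun u : ℝ => 2 * u / (1 + u))
      ((2 * 1 * (1 + u) - 2 * u * 1) / (1 + u) ^ 2) u :=
    ((hasDerivAt_id' u).const_mul 2).div ((hasDerivAt_id' u).const_add 1) hne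
  have hlog : HasDerivAt (fun u : ℝ => Real.log (1 + u)) (1 / (1 + u)) u := by
    simpa using ((hasDerivAt_id u).const_add 1).log hne
  refine (hfrac.sub hlog).congr_deriv ?_
  field_simp
  ring

lemma phiWF_inv_sq {x : ℝ} (hx : x ≠ 0) :
    phiWF (1 / x ^ 2) = 2 / (x ^ 2 + 1) - Real.log (1 + 1 / x ^ 2) := by
  unfold phiWF
  congr 1
  field_simp

lemma hasDerivAt_gWF {x : ℝ} (hx : x ≠ 0) : HasDerivAt gWF (-phiWF (1 / x ^ 2)) x := by
  have hx2 : x ^ 2 ≠ 0 := by positivity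
  have hinner : HasDerivAt (fun x : ℝ => 1 + 1 / x ^ 2) (-(2 * x) / (x ^ 2) ^ 2) x := by
    simpa using ((hasDerivAt_pow 2 x).inv hx2).const_add 1
  have hlog := hinner.log (by positivity)
  refine ((hasDerivAt_id x).mul hlog).congr_deriv ?_
  rw [phiWF_inv_sq hx, id]
  field_simp
  ring

lemma phiWF_monotoneOn : MonotoneOn phiWF (Icc 0 1) := by
  refine monotoneOn_of_hasDerivWithinAt_nonneg (f' := fun u => (1 - u) / (1 + u) ^ 2)
    (convex_Icc 0 1)
    (fun x hx => (hasDerivAt_phiWF (by linarith [hx.1])).continuousAt.continuousWithinAt)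
    (fun x hx => ?_) (fun x hx => ?_)
  all_goals rw [interior_Icc] at hx
  · exact (hasDerivAt_phiWF (by linarith [hx.1])).hasDerivWithinAt
  · exact div_nonneg (by linarith [hx.2]) (by positivity)

lemma phiWF_antitoneOn : AntitoneOn phiWF (Ici 1) := by
  refine antitoneOn_of_hasDerivWithinAt_nonpos (f' := fun u => (1 - u) / (1 + u) ^ 2)
    (convex_Ici 1)
    (fun x hx => (hasDerivAt_phiWF (by linarith [mem_Ici.1 hx])).continuousAt.continuousWithinAt)
    (fun x hx => ?_) (fun x hx => ?_)
  all_goals rw [interior_Ici, mem_Ioi] at hx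
  · exact (hasDerivAt_phiWF (by linarith)).hasDerivWithinAt
  · exact div_nonpos_of_nonpos_of_nonneg (by linarith) (by positivity)

lemma phiWF_nonneg_of_le {c u : ℝ} (hφc : phiWF c = 0) (hu₀ : 0 ≤ u) (huc : u ≤ c) :
    0 ≤ phiWF u := by
  rcases le_total u 1 with hu₁ | hu₁
  · simpa [phiWF] using phiWF_monotoneOn ⟨le_rfl, zero_le_one⟩ ⟨hu₀, hu₁⟩ hu₀
  · simpa [hφc] using phiWF_antitoneOn hu₁ (hu₁.trans huc) huc

lemma phiWF_nonpos_of_le {c u : ℝ} (hc : 1 ≤ c) (hφc : phiWF c = 0) (hcu : c ≤ u) :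
    phiWF u ≤ 0 := by
  simpa [hφc] using phiWF_antitoneOn hc (hc.trans hcu) hcu

lemma phiWF_inv_sq_eq_zero_of_isLocalMax {r : ℝ} (hr : 0 < r) (hmax : IsLocalMax gWF r) :
    phiWF (1 / r ^ 2) = 0 :=
  neg_eq_zero.1 (hmax.hasDerivAt_eq_zero (hasDerivAt_gWF hr.ne'))

lemma gWF_monotoneOn {r : ℝ} (hr₀ : 0 < r) (hr₁ : r ≤ 1) (hφr : phiWF (1 / r ^ 2) = 0) :
    MonotoneOn gWF (Ioc 0 r) := by
  refine monotoneOn_of_hasDerivWithinAt_nonneg (f' := fun x => -phiWF (1 / x ^ 2))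
    (convex_Ioc 0 r)
    (fun x hx => (hasDerivAt_gWF hx.1.ne').continuousAt.continuousWithinAt)
    (fun x hx => ?_) (fun x hx => ?_)
  all_goals rw [interior_Ioc] at hx
  · exact (hasDerivAt_gWF hx.1.ne').hasDerivWithinAt
  · refine neg_nonneg.2 (phiWF_nonpos_of_le ?_ hφr ?_)
    · exact one_le_one_div (by positivity) (pow_le_one₀ hr₀.le hr₁)
    · exact one_div_le_one_div_of_le (by nlinarith [hx.1]) (by nlinarith [hx.1, hx.2])

lemma gWF_antitoneOn {r : ℝ} (hr₀ : 0 < r) (hφr : phiWF (1 / r ^ 2) = 0) :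
    AntitoneOn gWF (Ici r) := by
  refine antitoneOn_of_hasDerivWithinAt_nonpos (f' := fun x => -phiWF (1 / x ^ 2))
    (convex_Ici r)
    (fun x hx => (hasDerivAt_gWF (hr₀.trans_le hx).ne').continuousAt.continuousWithinAt)
    (fun x hx => ?_) (fun x hx => ?_)
  all_goals rw [interior_Ici, mem_Ioi] at hx
  · exact (hasDerivAt_gWF (hr₀.trans hx).ne').hasDerivWithinAt
  · refine neg_nonpos.2 (phiWF_nonneg_of_le hφr (by positivity) ?_)
    exact one_div_le_one_div_of_le (by positivity) (by nlinarith)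

lemma hWF_eq_mul_gWF {γ : ℝ} (hγ : 0 < γ) (k : ℕ) :
    hWF γ k = √γ * gWF (k / √γ) := by
  have hs : √γ ≠ 0 := (Real.sqrt_pos.2 hγ).ne'
  have hinv : 1 / ((k : ℝ) / √γ) ^ 2 = γ / (k : ℝ) ^ 2 := by
    rw [one_div, ← inv_pow, inv_div, div_pow, Real.sq_sqrt hγ.le]
  rw [hWF, gWF, hinv, ← mul_assoc, mul_div_cancel₀ _ hs]

lemma le_max_floor_ceil_of_monotoneOn_of_antitoneOn {F : ℝ → ℝ} {t : ℝ}
    (hmono : MonotoneOn F (Ioc 0 t)) (hanti : AntitoneOn F (Ici t)) {k : ℕ} (hk : 0 < k) :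
    F k ≤ max (F ⌊t⌋₊) (F ⌈t⌉₊) := by
  rcases le_or_gt k ⌊t⌋₊ with hkF | hFk
  · have hF : 0 < ⌊t⌋₊ := hk.trans_le hkF
    have ht : 0 ≤ t := zero_le_one.trans (Nat.floor_pos.1 hF)
    refine le_max_of_le_left (hmono ⟨by positivity, ?_⟩ ⟨by positivity, Nat.floor_le ht⟩ ?_)
    · exact (Nat.cast_le.2 hkF).trans (Nat.floor_le ht)
    · exact_mod_cast hkF
  · have hCk : ⌈t⌉₊ ≤ k := (Nat.ceil_le_floor_add_one t).trans hFk
    refine le_max_of_le_right (hanti (Nat.le_ceil t) ((Nat.le_ceil t).trans ?_) ?_)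
    all_goals exact_mod_cast hCk

theorem stmt_14_general (γ : ℝ) (hγ : 0 < γ) (r : ℝ) (hr : r ∈ Set.Ioo (0 : ℝ) 1)
    (hrmax : ∀ x : ℝ, 0 < x →
      x * Real.log (1 + 1 / x ^ 2) ≤ r * Real.log (1 + 1 / r ^ 2)) :
    ∀ k : ℕ, 0 < k →
      hWF γ k ≤ max (hWF γ ⌊r * Real.sqrt γ⌋₊) (hWF γ ⌈r * Real.sqrt γ⌉₊) := by
  intro k hk
  obtain ⟨hr₀, hr₁⟩ := hr
  have hs : 0 < √γ := Real.sqrt_pos.2 hγ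
  have hφr : phiWF (1 / r ^ 2) = 0 := phiWF_inv_sq_eq_zero_of_isLocalMax hr₀ <|
    Filter.eventually_of_mem (Ioi_mem_nhds hr₀) hrmax
  have hdiv : Monotone (· / √γ) := monotone_div_right_of_nonneg hs.le
  have hmono : MonotoneOn (gWF ∘ (· / √γ)) (Ioc 0 (r * √γ)) :=
    (gWF_monotoneOn hr₀ hr₁.le hφr).comp (hdiv.monotoneOn _) fun x hx =>
      ⟨div_pos hx.1 hs, (div_le_iff₀ hs).2 hx.2⟩
  have hanti : AntitoneOn (gWF ∘ (· / √γ)) (Ici (r * √γ)) :=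
    (gWF_antitoneOn hr₀ hφr).comp_MonotoneOn (hdiv.monotoneOn _) fun x hx =>
      (le_div_iff₀ hs).2 hx
  simp only [hWF_eq_mul_gWF hγ, ← mul_max_of_nonneg _ _ hs.le]
  exact mul_le_mul_of_nonneg_left
    (le_max_floor_ceil_of_monotoneOn_of_antitoneOn hmono hanti hk) hs.le

/-- If `r ∈ (0,1)` is the global maximizer of
`g x = x log (1 + 1/x²)` on `(0, ∞)` and `r √γ ≥ 1`, then the maximum of
`h k = k log (1 + γ/k²)` over positive integers is attained at `⌊r √γ⌋` or
`⌈r √γ⌉`. -/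
theorem stmt_14 (γ : ℝ) (hγ : 0 < γ) (r : ℝ) (hr : r ∈ Set.Ioo (0 : ℝ) 1)
    (hrmax : ∀ x : ℝ, 0 < x →
      x * Real.log (1 + 1 / x ^ 2) ≤ r * Real.log (1 + 1 / r ^ 2))
    (hge1 : 1 ≤ r * Real.sqrt γ) :
    ∀ k : ℕ, 0 < k →
      hWF γ k ≤ max (hWF γ ⌊r * Real.sqrt γ⌋₊) (hWF γ ⌈r * Real.sqrt γ⌉₊) :=
  stmt_14_general γ hγ r hr hrmax
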